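/- For two vectors x, y ∈ ℝ^N that are not multiples of the all-ones vector 1, the Pearson correlation coefficient between x and y equals cos of the correlation distance, i.e., Pearson(x,y) = (cos d_a(x,y) − cos ℓ(x) cos ℓ(y)) / (sin ℓ(x) sin ℓ(y)), where ℓ(z) = d_a(z, −1). -/

import Mathlib

open Real BigOperators Filter

noncomputable section

/-- Index type for node pairs i < j of [n]. -/
abbrev PairIdx (n : ℕ) := {p : Fin n × Fin n // p.1 < p.2}

/-- Inner product on ℝ^N indexed by node pairs. -/
def inn {n : ℕ} (x y : PairIdx n → ℝ) : ℝ := ∑ p : PairIdx n, x p * y p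

/-- Euclidean norm. -/
def nrm {n : ℕ} (x : PairIdx n → ℝ) : ℝ := Real.sqrt (inn x x)

/-- Angular distance d_a(x,y) = arccos(⟨x,y⟩/(‖x‖‖y‖)). -/
def angDist {n : ℕ} (x y : PairIdx n → ℝ) : ℝ :=
  Real.arccos (inn x y / (nrm x * nrm y))

/-- The all-ones vector. -/
def allOnes (n : ℕ) : PairIdx n → ℝ := fun _ => 1

/-- Latitude ℓ(x) = d_a(x, -1). -/
def lat {n : ℕ} (x : PairIdx n → ℝ) : ℝ := angDist x (fun _ => -1)

/-- Clustering vector of a clustering given by a label function. -/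
def bvec {n : ℕ} {L : Type*} [DecidableEq L] (c : Fin n → L) : PairIdx n → ℝ :=
  fun p => if c p.1.1 = c p.1.2 then 1 else -1

/-- Intra-cluster pairs of a clustering. -/
def intraP {n : ℕ} {L : Type*} [DecidableEq L] (c : Fin n → L) : Finset (PairIdx n) :=
  Finset.univ.filter (fun p => c p.1.1 = c p.1.2)

/-- Inter-cluster pairs of a clustering. -/
def interP {n : ℕ} {L : Type*} [DecidableEq L] (c : Fin n → L) : Finset (PairIdx n) :=
  Finset.univ.filter (fun p => c p.1.1 ≠ c p.1.2)

/-- Pearson correlation between two vectors. -/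
def pearson {n : ℕ} (x y : PairIdx n → ℝ) : ℝ :=
  inn (fun p => x p - inn x (allOnes n) / (n.choose 2 : ℝ))
      (fun p => y p - inn y (allOnes n) / (n.choose 2 : ℝ)) /
  (nrm (fun p => x p - inn x (allOnes n) / (n.choose 2 : ℝ)) *
   nrm (fun p => y p - inn y (allOnes n) / (n.choose 2 : ℝ)))

/-! Pearson's correlation of `x` and `y` is the cosine of the angle between their components
orthogonal to `1` (equivalently to `-1`), and on the unit sphere that angle is the angle at the
vertex `-1` of the spherical triangle with vertices `x`, `y`, `-1`. The spherical law of cosines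
expresses it through the three sides `d_a(x, y)`, `ℓ(x)`, `ℓ(y)`. -/

namespace InnerProductGeometry

open RealInnerProductSpace

variable {V : Type*} [NormedAddCommGroup V] [InnerProductSpace ℝ V]

lemma inner_sub_smul_sub_smul (x y e : V) :
    ⟪x - (⟪x, e⟫ / ‖e‖ ^ 2) • e, y - (⟪y, e⟫ / ‖e‖ ^ 2) • e⟫ =
      ⟪x, y⟫ - ⟪x, e⟫ * ⟪y, e⟫ / ‖e‖ ^ 2 := by
  have hy : ⟪y, e⟫ / ‖e‖ ^ 2 * ‖e‖ ^ 2 = ⟪y, e⟫ :=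
    div_mul_cancel_of_imp fun h => by simp_all
  simp only [inner_sub_left, inner_sub_right, inner_smul_left, inner_smul_right,
    real_inner_self_eq_norm_sq, real_inner_comm y e, conj_trivial]
  linear_combination (⟪x, e⟫ / ‖e‖ ^ 2) * hy

lemma norm_sub_smul_eq_norm_mul_sin_angle (x e : V) :
    ‖x - (⟪x, e⟫ / ‖e‖ ^ 2) • e‖ = ‖x‖ * Real.sin (angle x e) := by
  rcases eq_or_ne e 0 with rfl | he
  · simp [angle_zero_right]
  have hcos : ‖x‖ * Real.cos (angle x e) = ⟪x, e⟫ / ‖e‖ := by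
    rw [eq_div_iff (norm_ne_zero_iff.2 he), ← cos_angle_mul_norm_mul_norm]
    ring
  rw [← Real.sqrt_sq (norm_nonneg _),
    ← Real.sqrt_sq (mul_nonneg (norm_nonneg x) (sin_angle_nonneg x e)),
    ← real_inner_self_eq_norm_sq, inner_sub_smul_sub_smul, real_inner_self_eq_norm_sq]
  congr 1
  linear_combination (-‖x‖ ^ 2) * Real.sin_sq_add_cos_sq (angle x e) +
    (‖x‖ * Real.cos (angle x e) + ⟪x, e⟫ / ‖e‖) * hcos

theorem cos_angle_sub_smul_sub_smul (x y e : V) :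
    Real.cos (angle (x - (⟪x, e⟫ / ‖e‖ ^ 2) • e) (y - (⟪y, e⟫ / ‖e‖ ^ 2) • e)) =
      (Real.cos (angle x y) - Real.cos (angle x e) * Real.cos (angle y e)) /
        (Real.sin (angle x e) * Real.sin (angle y e)) := by
  rw [cos_angle, inner_sub_smul_sub_smul, norm_sub_smul_eq_norm_mul_sin_angle,
    norm_sub_smul_eq_norm_mul_sin_angle, cos_angle, cos_angle, cos_angle]
  ring

end InnerProductGeometry

section PairIdx

open InnerProductGeometry RealInnerProductSpace

variable {n : ℕ}

abbrev toEuclideanSpace (x : PairIdx n → ℝ) : EuclideanSpace ℝ (PairIdx n) := WithLp.toLp 2 x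

lemma inn_eq_inner (x y : PairIdx n → ℝ) :
    inn x y = ⟪toEuclideanSpace x, toEuclideanSpace y⟫ := by
  simp only [inn, toEuclideanSpace, PiLp.inner_apply, RCLike.inner_apply, conj_trivial, mul_comm]

lemma nrm_eq_norm (x : PairIdx n → ℝ) : nrm x = ‖toEuclideanSpace x‖ := by
  rw [nrm, inn_eq_inner, real_inner_self_eq_norm_sq, Real.sqrt_sq (norm_nonneg _)]

lemma angDist_eq_angle (x y : PairIdx n → ℝ) :
    angDist x y = angle (toEuclideanSpace x) (toEuclideanSpace y) := by
  rw [angDist, angle, inn_eq_inner, nrm_eq_norm, nrm_eq_norm]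

lemma card_pairIdx (n : ℕ) : Fintype.card (PairIdx n) = n.choose 2 := by
  rw [Fintype.card_subtype, Fintype.card_product_filter_lt, Fintype.card_fin]

lemma norm_toEuclideanSpace_neg_one_sq :
    ‖toEuclideanSpace (fun _ : PairIdx n => (-1 : ℝ))‖ ^ 2 = n.choose 2 := by
  rw [← real_inner_self_eq_norm_sq, ← inn_eq_inner]
  simp [inn, card_pairIdx]

lemma toEuclideanSpace_centered (x : PairIdx n → ℝ) :
    toEuclideanSpace (fun p => x p - inn x (allOnes n) / (n.choose 2 : ℝ)) =
      toEuclideanSpace x - (⟪toEuclideanSpace x, toEuclideanSpace (fun _ => -1)⟫ /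
        ‖toEuclideanSpace (fun _ : PairIdx n => (-1 : ℝ))‖ ^ 2) •
          toEuclideanSpace (fun _ => -1) := by
  rw [← inn_eq_inner, norm_toEuclideanSpace_neg_one_sq]
  refine PiLp.ext fun p => ?_
  simp only [inn, allOnes, mul_one, toEuclideanSpace, mul_neg, Finset.sum_neg_distrib,
    PiLp.sub_apply, PiLp.smul_apply, smul_eq_mul, sub_neg_eq_add]
  ring

lemma pearson_eq_cos_angle (x y : PairIdx n → ℝ) :
    pearson x y = Real.cos (angle
      (toEuclideanSpace (fun p => x p - inn x (allOnes n) / (n.choose 2 : ℝ)))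
      (toEuclideanSpace (fun p => y p - inn y (allOnes n) / (n.choose 2 : ℝ)))) := by
  rw [pearson, cos_angle, inn_eq_inner, nrm_eq_norm, nrm_eq_norm]

end PairIdx

theorem stmt3_general (n : ℕ) (x y : PairIdx n → ℝ) :
    pearson x y =
      (Real.cos (angDist x y) - Real.cos (lat x) * Real.cos (lat y)) /
      (Real.sin (lat x) * Real.sin (lat y)) := by
  rw [pearson_eq_cos_angle, toEuclideanSpace_centered, toEuclideanSpace_centered,
    InnerProductGeometry.cos_angle_sub_smul_sub_smul, lat, lat, angDist_eq_angle,
    angDist_eq_angle, angDist_eq_angle]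

/-- for x, y not multiples of 1, the Pearson correlation equals the
hyperspherical law-of-cosines expression. -/
theorem stmt3 (n : ℕ) (x y : PairIdx n → ℝ)
    (hx : ∀ c : ℝ, x ≠ fun _ => c) (hy : ∀ c : ℝ, y ≠ fun _ => c) :
    pearson x y =
      (Real.cos (angDist x y) - Real.cos (lat x) * Real.cos (lat y)) /
      (Real.sin (lat x) * Real.sin (lat y)) :=
  stmt3_general n x y
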